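/- For ρ ∈ (−1, 1) let μ_ρ be the Borel probability measure on ℝ² with density (x, y) ↦ (2π√(1−ρ²))⁻¹ exp(−(x² − 2ρxy + y²)/(2(1−ρ²))) with respect to two-dimensional Lebesgue measure (the centered bivariate Gaussian law with unit variances and correlation ρ). Then (μ_ρ ⊗ μ_ρ)({((x, y), (x′, y′)) ∈ ℝ² × ℝ² : x·x′ > 0 and y·y′ > 0}) = 1/4 + arcsin²(ρ)/π². -/

import Mathlib

open MeasureTheory

/-- The centered bivariate Gaussian measure on `ℝ²` with unit variances and correlation `ρ`,
given by its density with respect to two-dimensional Lebesgue measure. -/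
noncomputable def biGauss (ρ : ℝ) : Measure (ℝ × ℝ) :=
  (volume : Measure (ℝ × ℝ)).withDensity fun p =>
    ENNReal.ofReal ((2 * Real.pi * Real.sqrt (1 - ρ ^ 2))⁻¹ *
      Real.exp (-(p.1 ^ 2 - 2 * ρ * p.1 * p.2 + p.2 ^ 2) / (2 * (1 - ρ ^ 2))))

/-!
The event says that `(x, y)` and `(x', y')` lie in the same open quadrant, so its probability is
`∑_Q μ_ρ(Q)²`. Writing `y = ρ x + √(1 - ρ²) z` with `(x, z)` standard Gaussian turns the positive
quadrant into a wedge of opening angle `π - arccos ρ = π / 2 + arcsin ρ`, whose standard Gaussian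
mass is read off in polar coordinates: `μ_ρ(Q₊₊) = 1/4 + arcsin ρ / (2π)` (Sheppard's formula).
The reflections `(x, y) ↦ (±x, ±y)` carry `μ_ρ` to `μ_{±ρ}`, so the four quadrants have masses
`1/4 ± arcsin ρ / (2π)`, and the sum of their squares is `1/4 + arcsin² ρ / π²`.
-/

open Real Set
open scoped ENNReal

theorem MeasureTheory.Measure.map_withDensity_abs_det_mul_comp {E : Type*}
    [NormedAddCommGroup E] [NormedSpace ℝ E] [MeasurableSpace E] [BorelSpace E]
    [FiniteDimensional ℝ E] (μ : Measure E) [μ.IsAddHaarMeasure] {T : E →ₗ[ℝ] E}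
    (hT : LinearMap.det T ≠ 0) {f : E → ℝ≥0∞} (hf : Measurable f) :
    (μ.withDensity fun x => ENNReal.ofReal |LinearMap.det T| * f (T x)).map T =
      μ.withDensity f := by
  have hTm : Measurable T := T.continuous_of_finiteDimensional.measurable
  have hdet : ENNReal.ofReal |LinearMap.det T| * ENNReal.ofReal |(LinearMap.det T)⁻¹| = 1 := by
    rw [← ENNReal.ofReal_mul (abs_nonneg _), ← abs_mul, mul_inv_cancel₀ hT, abs_one,
      ENNReal.ofReal_one]
  ext s hs
  rw [Measure.map_apply hTm hs, withDensity_apply _ (hTm hs), withDensity_apply _ hs,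
    lintegral_const_mul' _ _ ENNReal.ofReal_ne_top, ← setLIntegral_map hs hf hTm,
    Measure.map_linearMap_addHaar_eq_smul_addHaar μ hT, Measure.restrict_smul,
    lintegral_smul_measure, smul_eq_mul, ← mul_assoc, hdet, one_mul]

theorem MeasureTheory.Measure.map_withDensity_abs_det_mul_comp_plane
    {a b c d : ℝ} (hdet : a * d - b * c ≠ 0) {f : ℝ × ℝ → ℝ≥0∞} (hf : Measurable f) :
    (volume.withDensity fun p : ℝ × ℝ => ENNReal.ofReal |a * d - b * c| *
        f (a * p.1 + b * p.2, c * p.1 + d * p.2)).map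
      (fun p : ℝ × ℝ => (a * p.1 + b * p.2, c * p.1 + d * p.2)) = volume.withDensity f := by
  have hT : ⇑(Matrix.toLin (Module.Basis.finTwoProd ℝ) (Module.Basis.finTwoProd ℝ)
      !![a, b; c, d]) = fun p => (a * p.1 + b * p.2, c * p.1 + d * p.2) :=
    funext (Matrix.toLin_finTwoProd_apply a b c d)
  have hdetT : LinearMap.det (Matrix.toLin (Module.Basis.finTwoProd ℝ)
      (Module.Basis.finTwoProd ℝ) !![a, b; c, d]) = a * d - b * c := by
    rw [LinearMap.det_toLin, Matrix.det_fin_two_of]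
  have := Measure.map_withDensity_abs_det_mul_comp volume (hdetT ▸ hdet) hf
  rwa [hdetT, hT] at this

theorem integral_Ioi_mul_exp_neg_sq_div_two :
    ∫ r in Ioi (0 : ℝ), r * exp (-(r ^ 2 / 2)) = 1 := by
  have h := integral_mul_cexp_neg_mul_sq (b := 1 / 2) (by norm_num)
  rw [← Complex.ofReal_inj, ← integral_complex_ofReal]
  convert h using 1
  · push_cast; ring_nf
  · norm_num

theorem Real.cos_pos_iff_of_mem_Ioo {x : ℝ} (hx : x ∈ Ioo (-(π + π / 2)) (π + π / 2)) :
    0 < cos x ↔ x ∈ Ioo (-(π / 2)) (π / 2) := by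
  refine ⟨fun hcos => ⟨?_, ?_⟩, cos_pos_of_mem_Ioo⟩
  · by_contra! h
    have := cos_nonpos_of_pi_div_two_le_of_le (x := -x) (by linarith) (by linarith [hx.1])
    rw [cos_neg] at this
    linarith
  · by_contra! h
    linarith [cos_nonpos_of_pi_div_two_le_of_le h hx.2.le]

theorem Real.cos_pos_and_cos_sub_pos_iff {φ θ : ℝ} (hφ₀ : 0 < φ) (hφ : φ < π)
    (hθ : θ ∈ Ioo (-π) π) :
    0 < cos θ ∧ 0 < cos (θ - φ) ↔ θ ∈ Ioo (φ - π / 2) (π / 2) := by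
  obtain ⟨hθ₀, hθ₁⟩ := hθ
  rw [cos_pos_iff_of_mem_Ioo ⟨by linarith, by linarith⟩]
  constructor
  · rintro ⟨⟨h₀, h₁⟩, h⟩
    rw [cos_pos_iff_of_mem_Ioo ⟨by linarith, by linarith⟩] at h
    exact ⟨by linarith [h.1], h₁⟩
  · rintro ⟨h₀, h₁⟩
    exact ⟨⟨by linarith, h₁⟩, cos_pos_of_mem_Ioo ⟨by linarith, by linarith⟩⟩

noncomputable def biGaussDensity (ρ : ℝ) (p : ℝ × ℝ) : ℝ :=
  (2 * π * √(1 - ρ ^ 2))⁻¹ * exp (-(p.1 ^ 2 - 2 * ρ * p.1 * p.2 + p.2 ^ 2) / (2 * (1 - ρ ^ 2)))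

theorem biGauss_eq_withDensity (ρ : ℝ) :
    biGauss ρ = volume.withDensity fun p => ENNReal.ofReal (biGaussDensity ρ p) :=
  rfl

theorem measurable_biGaussDensity (ρ : ℝ) : Measurable (biGaussDensity ρ) := by
  unfold biGaussDensity; fun_prop

theorem biGaussDensity_nonneg (ρ : ℝ) (p : ℝ × ℝ) : 0 ≤ biGaussDensity ρ p := by
  unfold biGaussDensity; positivity

theorem biGaussDensity_zero (p : ℝ × ℝ) :
    biGaussDensity 0 p = (2 * π)⁻¹ * exp (-((p.1 ^ 2 + p.2 ^ 2) / 2)) := by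
  simp only [biGaussDensity]
  norm_num
  ring_nf

instance (ρ : ℝ) : SFinite (biGauss ρ) := by
  rw [biGauss_eq_withDensity]; infer_instance

theorem biGauss_map_mul (ρ : ℝ) {a b : ℝ} (ha : a ^ 2 = 1) (hb : b ^ 2 = 1) :
    (biGauss ρ).map (fun p => (a * p.1, b * p.2)) = biGauss (a * b * ρ) := by
  have habs : |a * b| = 1 := by
    rw [← pow_eq_one_iff_of_nonneg (abs_nonneg _) two_ne_zero, sq_abs, mul_pow, ha, hb, one_mul]
  have hdens (p : ℝ × ℝ) :
      biGaussDensity ρ p = biGaussDensity (a * b * ρ) (a * p.1, b * p.2) := by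
    have hρ : (a * b * ρ) ^ 2 = ρ ^ 2 := by rw [mul_pow, mul_pow, ha, hb]; ring
    simp only [biGaussDensity, hρ]
    congr 4
    linear_combination (-(p.1 ^ 2 - 2 * ρ * p.1 * p.2)) * ha +
      (-(p.2 ^ 2 - 2 * ρ * p.1 * p.2 * a ^ 2)) * hb
  have key := Measure.map_withDensity_abs_det_mul_comp_plane (a := a) (b := 0) (c := 0)
    (d := b) (by rw [mul_zero, sub_zero, ← abs_ne_zero, habs]; exact one_ne_zero)
    (measurable_biGaussDensity (a * b * ρ)).ennreal_ofReal
  simp only [mul_zero, zero_mul, sub_zero, add_zero, zero_add, habs, ENNReal.ofReal_one,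
    one_mul] at key
  rw [biGauss_eq_withDensity, biGauss_eq_withDensity, ← key]
  simp only [hdens]

theorem biGauss_eq_map_biGauss_zero {ρ : ℝ} (hρ : |ρ| < 1) :
    biGauss ρ = (biGauss 0).map fun p => (p.1, ρ * p.1 + √(1 - ρ ^ 2) * p.2) := by
  have hρ₂ : 0 < 1 - ρ ^ 2 := by nlinarith [sq_abs ρ, abs_nonneg ρ]
  set s := √(1 - ρ ^ 2) with hs_def
  have hs : 0 < s := sqrt_pos.mpr hρ₂
  have hs₂ : s ^ 2 = 1 - ρ ^ 2 := sq_sqrt hρ₂.le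
  have hdens (p : ℝ × ℝ) :
      s * biGaussDensity ρ (p.1, ρ * p.1 + s * p.2) = biGaussDensity 0 p := by
    have hquad : p.1 ^ 2 - 2 * ρ * p.1 * (ρ * p.1 + s * p.2) + (ρ * p.1 + s * p.2) ^ 2 =
        (1 - ρ ^ 2) * (p.1 ^ 2 + p.2 ^ 2) := by
      linear_combination p.2 ^ 2 * hs₂
    rw [biGaussDensity_zero, biGaussDensity, ← hs_def, hquad,
      show -((1 - ρ ^ 2) * (p.1 ^ 2 + p.2 ^ 2)) / (2 * (1 - ρ ^ 2)) =
        -((p.1 ^ 2 + p.2 ^ 2) / 2) by field_simp]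
    field_simp
  have key := Measure.map_withDensity_abs_det_mul_comp_plane (a := 1) (b := 0) (c := ρ)
    (d := s) (by rw [one_mul, zero_mul, sub_zero]; exact hs.ne')
    (measurable_biGaussDensity ρ).ennreal_ofReal
  simp only [one_mul, zero_mul, sub_zero, add_zero, abs_of_pos hs,
    ← ENNReal.ofReal_mul hs.le, hdens] at key
  rw [biGauss_eq_withDensity, biGauss_eq_withDensity, key]

theorem biGauss_zero_wedge {φ : ℝ} (hφ₀ : 0 < φ) (hφ : φ < π) :
    biGauss 0 {p | 0 < p.1 ∧ 0 < cos φ * p.1 + sin φ * p.2} =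
      ENNReal.ofReal ((π - φ) / (2 * π)) := by
  set W := {p : ℝ × ℝ | 0 < p.1 ∧ 0 < cos φ * p.1 + sin φ * p.2}
  set A := Ioo (φ - π / 2) (π / 2)
  have hW : MeasurableSet W :=
    (measurableSet_lt measurable_const measurable_fst).inter (measurableSet_lt measurable_const
      (by fun_prop : Measurable fun p : ℝ × ℝ => cos φ * p.1 + sin φ * p.2))
  have hpolar : ∀ q ∈ polarCoord.target,
      q.1 • W.indicator (biGaussDensity 0) (polarCoord.symm q) =
        (2 * π)⁻¹ * (q.1 * exp (-(q.1 ^ 2 / 2)) * A.indicator (fun _ => 1) q.2) := by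
    rintro ⟨r, θ⟩ ⟨hr : 0 < r, hθ : θ ∈ Ioo (-π) π⟩
    have hmem : polarCoord.symm (r, θ) ∈ W ↔ θ ∈ A := by
      rw [← cos_pos_and_cos_sub_pos_iff hφ₀ hφ hθ, cos_sub]
      simp only [polarCoord_symm_apply, W, mem_ofPred_eq]
      rw [show cos φ * (r * cos θ) + sin φ * (r * sin θ) =
          r * (cos θ * cos φ + sin θ * sin φ) by ring,
        mul_pos_iff_of_pos_left hr, mul_pos_iff_of_pos_left hr]
    by_cases hθ' : θ ∈ A
    · rw [indicator_of_mem (hmem.mpr hθ'), indicator_of_mem hθ', biGaussDensity_zero]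
      simp only [polarCoord_symm_apply, smul_eq_mul, mul_one]
      rw [show (r * cos θ) ^ 2 + (r * sin θ) ^ 2 = r ^ 2 by
        linear_combination r ^ 2 * sin_sq_add_cos_sq θ]
      ring
    · rw [indicator_of_notMem (mt hmem.mp hθ'), indicator_of_notMem hθ', smul_zero, mul_zero,
        mul_zero]
  have hint : ∫ p in W, biGaussDensity 0 p = (π - φ) / (2 * π) := by
    rw [← integral_indicator hW, ← integral_comp_polarCoord_symm,
      setIntegral_congr_fun polarCoord.open_target.measurableSet hpolar, polarCoord_target,
      Measure.volume_eq_prod, integral_const_mul,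
      setIntegral_prod_mul (fun r => r * exp (-(r ^ 2 / 2))) (A.indicator fun _ => 1),
      integral_Ioi_mul_exp_neg_sq_div_two, setIntegral_indicator measurableSet_Ioo,
      Ioo_inter_Ioo, max_eq_right (by linarith), min_eq_right (by linarith), setIntegral_const,
      Real.volume_real_Ioo_of_le (by linarith)]
    field_simp
    ring
  have hintegrable : IntegrableOn (biGaussDensity 0) W := by
    refine (integrable_indicator_iff hW).mp (Integrable.of_integral_ne_zero ?_)
    rw [integral_indicator hW, hint]
    exact (div_pos (sub_pos.mpr hφ) (by positivity)).ne'
  rw [biGauss_eq_withDensity, withDensity_apply _ hW, ← hint,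
    ofReal_integral_eq_lintegral_ofReal hintegrable (ae_of_all _ (biGaussDensity_nonneg 0))]

def quadrant (a b : ℝ) : Set (ℝ × ℝ) := {p | 0 < a * p.1 ∧ 0 < b * p.2}

theorem measurableSet_quadrant (a b : ℝ) : MeasurableSet (quadrant a b) :=
  (measurableSet_lt measurable_const (measurable_fst.const_mul a)).inter
    (measurableSet_lt measurable_const (measurable_snd.const_mul b))

theorem biGauss_quadrant_one_one {ρ : ℝ} (hρ : |ρ| < 1) :
    biGauss ρ (quadrant 1 1) = ENNReal.ofReal (1 / 4 + arcsin ρ / (2 * π)) := by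
  obtain ⟨hρ₁, hρ₂⟩ := abs_lt.mp hρ
  have hpre : (fun p : ℝ × ℝ => (p.1, ρ * p.1 + √(1 - ρ ^ 2) * p.2)) ⁻¹' quadrant 1 1 =
      {p | 0 < p.1 ∧ 0 < cos (arccos ρ) * p.1 + sin (arccos ρ) * p.2} := by
    simp [quadrant, cos_arccos hρ₁.le hρ₂.le, sin_arccos]
  rw [biGauss_eq_map_biGauss_zero hρ,
    Measure.map_apply (by fun_prop) (measurableSet_quadrant 1 1), hpre,
    biGauss_zero_wedge (arccos_pos.mpr hρ₂) (arccos_lt_pi.mpr hρ₁),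
    arccos_eq_pi_div_two_sub_arcsin]
  congr 1
  field_simp
  ring

theorem biGauss_quadrant {ρ : ℝ} (hρ : |ρ| < 1) {a b : ℝ} (ha : a = 1 ∨ a = -1)
    (hb : b = 1 ∨ b = -1) :
    biGauss ρ (quadrant a b) = ENNReal.ofReal (1 / 4 + a * b * arcsin ρ / (2 * π)) := by
  have hab : a * b = 1 ∨ a * b = -1 := by
    rcases ha with rfl | rfl <;> rcases hb with rfl | rfl <;> norm_num
  have hpre : (fun p : ℝ × ℝ => (a * p.1, b * p.2)) ⁻¹' quadrant 1 1 = quadrant a b := by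
    simp [quadrant]
  rw [← hpre, ← Measure.map_apply (by fun_prop) (measurableSet_quadrant 1 1),
    biGauss_map_mul ρ (by rcases ha with rfl | rfl <;> norm_num)
      (by rcases hb with rfl | rfl <;> norm_num),
    biGauss_quadrant_one_one (by rcases hab with h | h <;> simp [h, hρ])]
  rcases hab with h | h <;> simp [h, arcsin_neg, neg_div]

theorem biGauss_prod_quadrant_prod_self {ρ : ℝ} (hρ : |ρ| < 1) {a b : ℝ}
    (ha : a = 1 ∨ a = -1) (hb : b = 1 ∨ b = -1) :
    (biGauss ρ).prod (biGauss ρ) (quadrant a b ×ˢ quadrant a b) =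
      ENNReal.ofReal ((1 / 4 + a * b * arcsin ρ / (2 * π)) ^ 2) := by
  have hnonneg : 0 ≤ 1 / 4 + a * b * arcsin ρ / (2 * π) := by
    have hπ := pi_pos
    have := neg_pi_div_two_le_arcsin ρ
    have := arcsin_le_pi_div_two ρ
    rw [show 1 / 4 + a * b * arcsin ρ / (2 * π) = (π / 2 + a * b * arcsin ρ) / (2 * π) by
      field_simp; ring]
    rcases ha with rfl | rfl <;> rcases hb with rfl | rfl <;>
      exact div_nonneg (by linarith) (by positivity)
  rw [Measure.prod_prod, biGauss_quadrant hρ ha hb, sq, ENNReal.ofReal_mul hnonneg]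

theorem mul_pos_iff_exists_sign {x y : ℝ} :
    0 < x * y ↔ ∃ a ∈ ({1, -1} : Finset ℝ), 0 < a * x ∧ 0 < a * y := by
  norm_num [mul_pos_iff]

theorem eq_of_sign_mul_pos {a a' x : ℝ} (ha : a ∈ ({1, -1} : Finset ℝ))
    (ha' : a' ∈ ({1, -1} : Finset ℝ)) (h : 0 < a * x) (h' : 0 < a' * x) : a = a' := by
  simp only [Finset.mem_insert, Finset.mem_singleton] at ha ha'
  rcases ha with rfl | rfl <;> rcases ha' with rfl | rfl <;> linarith

theorem setOf_mul_pos_and_mul_pos_eq_biUnion_quadrant :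
    {q : (ℝ × ℝ) × (ℝ × ℝ) | 0 < q.1.1 * q.2.1 ∧ 0 < q.1.2 * q.2.2} =
      ⋃ e ∈ ({1, -1} : Finset ℝ) ×ˢ ({1, -1} : Finset ℝ),
        quadrant e.1 e.2 ×ˢ quadrant e.1 e.2 := by
  ext ⟨⟨x, y⟩, ⟨x', y'⟩⟩
  rw [mem_ofPred_eq, mul_pos_iff_exists_sign, mul_pos_iff_exists_sign]
  simp only [mem_iUnion, exists_prop, Prod.exists, Finset.mem_product, mem_prod, quadrant,
    mem_ofPred_eq]
  constructor
  · rintro ⟨⟨a, ha, hx, hx'⟩, b, hb, hy, hy'⟩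
    exact ⟨a, b, ⟨ha, hb⟩, ⟨hx, hy⟩, hx', hy'⟩
  · rintro ⟨a, b, ⟨ha, hb⟩, ⟨hx, hy⟩, hx', hy'⟩
    exact ⟨⟨a, ha, hx, hx'⟩, b, hb, hy, hy'⟩

theorem pairwiseDisjoint_quadrant_prod_self :
    (↑(({1, -1} : Finset ℝ) ×ˢ ({1, -1} : Finset ℝ)) : Set (ℝ × ℝ)).PairwiseDisjoint
      fun e => quadrant e.1 e.2 ×ˢ quadrant e.1 e.2 := by
  rintro ⟨a, b⟩ hab ⟨a', b'⟩ hab' hne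
  rw [Finset.coe_product, mem_prod] at hab hab'
  refine disjoint_prod.mpr (Or.inl (disjoint_left.mpr fun p hp hp' => hne ?_))
  exact Prod.ext (eq_of_sign_mul_pos hab.1 hab'.1 hp.1 hp'.1)
    (eq_of_sign_mul_pos hab.2 hab'.2 hp.2 hp'.2)

/-- For two independent copies `(X, Y)`, `(X′, Y′)` of a centered bivariate Gaussian vector
with unit variances and correlation `ρ ∈ (−1, 1)`,
`P(X·X′ > 0, Y·Y′ > 0) = 1/4 + arcsin²(ρ)/π²`. -/
theorem stmt18 (ρ : ℝ) (hρ₁ : -1 < ρ) (hρ₂ : ρ < 1) :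
    ((biGauss ρ).prod (biGauss ρ))
        {q : (ℝ × ℝ) × (ℝ × ℝ) | 0 < q.1.1 * q.2.1 ∧ 0 < q.1.2 * q.2.2} =
      ENNReal.ofReal (1 / 4 + Real.arcsin ρ ^ 2 / Real.pi ^ 2) := by
  have hsquare : ∀ e ∈ ({1, -1} : Finset ℝ) ×ˢ ({1, -1} : Finset ℝ),
      (biGauss ρ).prod (biGauss ρ) (quadrant e.1 e.2 ×ˢ quadrant e.1 e.2) =
        ENNReal.ofReal ((1 / 4 + e.1 * e.2 * arcsin ρ / (2 * π)) ^ 2) := by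
    intro e he
    simp only [Finset.mem_product, Finset.mem_insert, Finset.mem_singleton] at he
    exact biGauss_prod_quadrant_prod_self (abs_lt.mpr ⟨hρ₁, hρ₂⟩) he.1 he.2
  rw [setOf_mul_pos_and_mul_pos_eq_biUnion_quadrant,
    measure_biUnion_finset pairwiseDisjoint_quadrant_prod_self
      fun e _ => (measurableSet_quadrant _ _).prod (measurableSet_quadrant _ _),
    Finset.sum_congr rfl hsquare, ← ENNReal.ofReal_sum_of_nonneg fun _ _ => sq_nonneg _]
  congr 1
  have h : (1 : ℝ) ≠ -1 := by norm_num
  rw [Finset.sum_product, Finset.sum_pair h, Finset.sum_pair h, Finset.sum_pair h]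
  field_simp
  ring
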